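/- arXiv:1604.08657 — 2 statements merged into one kernel-verified Lean document; each statement's English description precedes it below -/
import Mathlib

section
/- For all k, ℓ ≥ 2 there exists a set of C(k+ℓ-4, k-2) points in the plane in general position, with distinct x-coordinates, containing no k-cup and no ℓ-cap. -/
/-- Signed area determinant: positive iff `c` is to the left of the directed line `a → b`. -/
def det2 (a b c : ℝ × ℝ) : ℝ :=
  (b.1 - a.1) * (c.2 - a.2) - (b.2 - a.2) * (c.1 - a.1)

/-- A planar point set is in general position if no three of its points are collinear. -/
def GenPos (S : Set (ℝ × ℝ)) : Prop :=
  ∀ p ∈ S, ∀ q ∈ S, ∀ r ∈ S, p ≠ q → p ≠ r → q ≠ r →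
    ¬ Collinear ℝ ({p, q, r} : Set (ℝ × ℝ))

/-- A planar point set is in convex position if every point is a vertex of the convex hull,
i.e. no point lies in the convex hull of the others. -/
def ConvexPos (S : Set (ℝ × ℝ)) : Prop :=
  ∀ p ∈ S, p ∉ convexHull ℝ (S \ {p})

/-- Slope of the segment from `p` to `q`. -/
noncomputable def slope2 (p q : ℝ × ℝ) : ℝ := (q.2 - p.2) / (q.1 - p.1)

/-- `f 0, …, f (m-1)` is an m-cup: x-coordinates strictly increasing and slopes of
consecutive segments strictly increasing. -/
def IsCupSeq (m : ℕ) (f : ℕ → ℝ × ℝ) : Prop :=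
  (∀ i j, i < j → j < m → (f i).1 < (f j).1) ∧
  (∀ i, i + 2 < m → slope2 (f i) (f (i + 1)) < slope2 (f (i + 1)) (f (i + 2)))

/-- `f 0, …, f (m-1)` is an m-cap: x-coordinates strictly increasing and slopes of
consecutive segments strictly decreasing. -/
def IsCapSeq (m : ℕ) (f : ℕ → ℝ × ℝ) : Prop :=
  (∀ i j, i < j → j < m → (f i).1 < (f j).1) ∧
  (∀ i, i + 2 < m → slope2 (f (i + 1)) (f (i + 2)) < slope2 (f i) (f (i + 1)))

/-!
Induction on `k + l`, following Erdős and Szekeres. Given extremal sets `A` for `(k - 1, l)` and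
`B` for `(k, l - 1)`, translate `B` so far to the right and so high up that every segment from a
point of `A` to a point of `B` is steeper than every segment inside `A` or inside `B`. Along a cup
or a cap the points of `A` come before those of `B`, and the steep transition forces a cup meeting
`A` to have at most one point in `B`, and a cap meeting `B` to have at most one point in `A`.
Hence `A ∪ B` has no `k`-cup and no `l`-cap, and Pascal's rule gives its size.
-/

open Pointwise

theorem slope2_comm (p q : ℝ × ℝ) : slope2 p q = slope2 q p := by
  rw [slope2, slope2, ← neg_div_neg_eq, neg_sub, neg_sub]

theorem slope2_add_left (v p q : ℝ × ℝ) : slope2 (v + p) (v + q) = slope2 p q := by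
  simp only [slope2, Prod.fst_add, Prod.snd_add, add_sub_add_left_eq_sub]

theorem slope2_eq_of_collinear {p q r : ℝ × ℝ} (h : Collinear ℝ ({p, q, r} : Set (ℝ × ℝ)))
    (hpq : p.1 ≠ q.1) (hpr : p.1 ≠ r.1) : slope2 p q = slope2 p r := by
  obtain ⟨v, hv⟩ := (collinear_iff_of_mem (Set.mem_insert p _)).1 h
  have slope_eq (x : ℝ × ℝ) (hx : x ∈ ({p, q, r} : Set (ℝ × ℝ))) (hpx : p.1 ≠ x.1) :
      slope2 p x = v.2 / v.1 := by
    obtain ⟨c, rfl⟩ := hv x hx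
    have hc : c * v.1 ≠ 0 := by simpa [eq_comm] using hpx
    simp only [slope2, vadd_eq_add, Prod.fst_add, Prod.snd_add, Prod.smul_fst, Prod.smul_snd,
      smul_eq_mul, add_sub_cancel_right]
    rw [mul_div_mul_left _ _ (left_ne_zero_of_mul hc)]
  rw [slope_eq q (by simp) hpq, slope_eq r (by simp) hpr]

theorem collinear_vadd_iff {k V P : Type*} [DivisionRing k] [AddCommGroup V] [Module k V]
    [AddTorsor V P] (v : V) (s : Set P) : Collinear k (v +ᵥ s) ↔ Collinear k s := by
  rw [Collinear, Collinear, vectorSpan_vadd]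

theorem GenPos.vadd {S : Set (ℝ × ℝ)} (h : GenPos S) (v : ℝ × ℝ) : GenPos (v +ᵥ S) := by
  simp only [GenPos, ← Set.image_vadd, Set.forall_mem_image, ne_eq, vadd_left_cancel_iff]
  intro p hp q hq r hr hpq hpr hqr
  rw [← Set.vadd_set_singleton, ← Set.vadd_set_insert, ← Set.vadd_set_insert, collinear_vadd_iff]
  exact h p hp q hq r hr hpq hpr hqr

theorem IsCupSeq.mono {m n : ℕ} {f : ℕ → ℝ × ℝ} (h : IsCupSeq m f) (hnm : n ≤ m) :
    IsCupSeq n f :=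
  ⟨fun i j hij hj => h.1 i j hij (by omega), fun i hi => h.2 i (by omega)⟩

theorem IsCapSeq.tail {m : ℕ} {f : ℕ → ℝ × ℝ} (h : IsCapSeq (m + 1) f) :
    IsCapSeq m (fun i => f (i + 1)) :=
  ⟨fun i j hij hj => h.1 (i + 1) (j + 1) (by omega) (by omega), fun i hi => h.2 (i + 1) (by omega)⟩

theorem IsCupSeq.add_left {m : ℕ} {f : ℕ → ℝ × ℝ} (h : IsCupSeq m f) (v : ℝ × ℝ) :
    IsCupSeq m (fun i => v + f i) := by
  simpa only [IsCupSeq, Prod.fst_add, add_lt_add_iff_left, slope2_add_left] using h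

theorem IsCapSeq.add_left {m : ℕ} {f : ℕ → ℝ × ℝ} (h : IsCapSeq m f) (v : ℝ × ℝ) :
    IsCapSeq m (fun i => v + f i) := by
  simpa only [IsCapSeq, Prod.fst_add, add_lt_add_iff_left, slope2_add_left] using h

def HasCup (P : Finset (ℝ × ℝ)) (m : ℕ) : Prop :=
  ∃ f : ℕ → ℝ × ℝ, (∀ i < m, f i ∈ P) ∧ IsCupSeq m f

def HasCap (P : Finset (ℝ × ℝ)) (m : ℕ) : Prop :=
  ∃ f : ℕ → ℝ × ℝ, (∀ i < m, f i ∈ P) ∧ IsCapSeq m f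

theorem HasCup.of_vadd {P : Finset (ℝ × ℝ)} {m : ℕ} {v : ℝ × ℝ} (h : HasCup (v +ᵥ P) m) :
    HasCup P m := by
  obtain ⟨f, hf, hcup⟩ := h
  refine ⟨fun i => -v + f i, fun i hi => ?_, hcup.add_left (-v)⟩
  obtain ⟨p, hp, hfp⟩ := Finset.mem_vadd_finset.1 (hf i hi)
  simpa [← hfp] using hp

theorem HasCap.of_vadd {P : Finset (ℝ × ℝ)} {m : ℕ} {v : ℝ × ℝ} (h : HasCap (v +ᵥ P) m) :
    HasCap P m := by
  obtain ⟨f, hf, hcap⟩ := h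
  refine ⟨fun i => -v + f i, fun i hi => ?_, hcap.add_left (-v)⟩
  obtain ⟨p, hp, hfp⟩ := Finset.mem_vadd_finset.1 (hf i hi)
  simpa [← hfp] using hp

structure IsCupCapFree (k l : ℕ) (P : Finset (ℝ × ℝ)) : Prop where
  genPos : GenPos P
  injOn_fst : Set.InjOn Prod.fst (P : Set (ℝ × ℝ))
  not_hasCup : ¬ HasCup P k
  not_hasCap : ¬ HasCap P l

theorem IsCupCapFree.vadd {k l : ℕ} {P : Finset (ℝ × ℝ)} (h : IsCupCapFree k l P)
    (v : ℝ × ℝ) : IsCupCapFree k l (v +ᵥ P) where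
  genPos := by simpa only [Finset.coe_vadd_finset] using h.genPos.vadd v
  injOn_fst := by
    rw [Finset.coe_vadd_finset, ← Set.image_vadd]
    rintro _ ⟨p, hp, rfl⟩ _ ⟨q, hq, rfl⟩ hpq
    simp only [vadd_eq_add, Prod.fst_add, add_right_inj] at hpq
    rw [h.injOn_fst hp hq hpq]
  not_hasCup hcup := h.not_hasCup hcup.of_vadd
  not_hasCap hcap := h.not_hasCap hcap.of_vadd

theorem isCupCapFree_singleton {k l : ℕ} (p : ℝ × ℝ) (hk : 2 ≤ k) (hl : 2 ≤ l) :
    IsCupCapFree k l {p} where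
  genPos q hq r hr _ _ hqr := by simp_all
  injOn_fst := by simp
  not_hasCup := by
    rintro ⟨f, hf, hcup⟩
    have hx := hcup.1 0 1 one_pos hk
    rw [Finset.mem_singleton.1 (hf 0 (by omega)), Finset.mem_singleton.1 (hf 1 hk)] at hx
    exact hx.false
  not_hasCap := by
    rintro ⟨f, hf, hcap⟩
    have hx := hcap.1 0 1 one_pos hl
    rw [Finset.mem_singleton.1 (hf 0 (by omega)), Finset.mem_singleton.1 (hf 1 hl)] at hx
    exact hx.false

structure SteeplyRight (A B : Finset (ℝ × ℝ)) : Prop where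
  fst_lt : ∀ a ∈ A, ∀ b ∈ B, a.1 < b.1
  slope_left_lt : ∀ a ∈ A, ∀ b ∈ B, ∀ p ∈ A, ∀ q ∈ A, slope2 p q < slope2 a b
  slope_right_lt : ∀ a ∈ A, ∀ b ∈ B, ∀ p ∈ B, ∀ q ∈ B, slope2 p q < slope2 a b

namespace SteeplyRight

variable {A B : Finset (ℝ × ℝ)}

theorem disjoint (h : SteeplyRight A B) : Disjoint A B :=
  Finset.disjoint_left.2 fun a haA haB => (h.fst_lt a haA a haB).false

theorem mem_left_of_fst_lt (h : SteeplyRight A B) {p q : ℝ × ℝ} (hp : p ∈ A ∪ B) (hq : q ∈ A)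
    (hpq : p.1 < q.1) : p ∈ A :=
  (Finset.mem_union.1 hp).resolve_right fun hpB => (h.fst_lt q hq p hpB).not_gt hpq

theorem mem_right_of_fst_lt (h : SteeplyRight A B) {p q : ℝ × ℝ} (hp : p ∈ B) (hq : q ∈ A ∪ B)
    (hpq : p.1 < q.1) : q ∈ B :=
  (Finset.mem_union.1 hq).resolve_left fun hqA => (h.fst_lt q hqA p hp).not_gt hpq

theorem not_collinear_left (h : SteeplyRight A B) {p q r : ℝ × ℝ} (hp : p ∈ A) (hq : q ∈ A)
    (hr : r ∈ B) (hpq : p.1 ≠ q.1) : ¬ Collinear ℝ ({p, q, r} : Set (ℝ × ℝ)) := fun hcol =>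
  (h.slope_left_lt p hp r hr p hp q hq).ne
    (slope2_eq_of_collinear hcol hpq (h.fst_lt p hp r hr).ne)

theorem not_collinear_right (h : SteeplyRight A B) {p q r : ℝ × ℝ} (hp : p ∈ B) (hq : q ∈ B)
    (hr : r ∈ A) (hpq : p.1 ≠ q.1) : ¬ Collinear ℝ ({p, q, r} : Set (ℝ × ℝ)) := fun hcol =>
  (h.slope_right_lt r hr p hp p hp q hq).ne <| by
    rw [slope2_comm r p]
    exact slope2_eq_of_collinear hcol hpq (h.fst_lt r hr p hp).ne'

theorem genPos_union (h : SteeplyRight A B) (hA : GenPos A) (hB : GenPos B)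
    (hAx : Set.InjOn Prod.fst (A : Set (ℝ × ℝ))) (hBx : Set.InjOn Prod.fst (B : Set (ℝ × ℝ))) :
    GenPos (A ∪ B : Finset (ℝ × ℝ)) := by
  have rot (p q r : ℝ × ℝ) : ({p, q, r} : Set (ℝ × ℝ)) = {q, r, p} := by
    rw [Set.insert_comm, Set.pair_comm]
  have swap (p q r : ℝ × ℝ) : ({p, q, r} : Set (ℝ × ℝ)) = {p, r, q} := by
    rw [Set.pair_comm]
  intro p hp q hq r hr hpq hpr hqr
  simp only [Finset.coe_union, Set.mem_union, Finset.mem_coe] at hp hq hr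
  rcases hp with hp | hp <;> rcases hq with hq | hq <;> rcases hr with hr | hr
  · exact hA p hp q hq r hr hpq hpr hqr
  · exact h.not_collinear_left hp hq hr (hAx.ne hp hq hpq)
  · rw [swap]; exact h.not_collinear_left hp hr hq (hAx.ne hp hr hpr)
  · rw [rot]; exact h.not_collinear_right hq hr hp (hBx.ne hq hr hqr)
  · rw [rot]; exact h.not_collinear_left hq hr hp (hAx.ne hq hr hqr)
  · rw [swap]; exact h.not_collinear_right hp hr hq (hBx.ne hp hr hpr)
  · exact h.not_collinear_right hp hq hr (hBx.ne hp hq hpq)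
  · exact hB p hp q hq r hr hpq hpr hqr

theorem injOn_fst_union (h : SteeplyRight A B) (hAx : Set.InjOn Prod.fst (A : Set (ℝ × ℝ)))
    (hBx : Set.InjOn Prod.fst (B : Set (ℝ × ℝ))) :
    Set.InjOn Prod.fst ((A ∪ B : Finset (ℝ × ℝ)) : Set (ℝ × ℝ)) := by
  rw [Finset.coe_union, Set.injOn_union (Finset.disjoint_coe.2 h.disjoint)]
  exact ⟨hAx, hBx, fun a ha b hb => (h.fst_lt a ha b hb).ne⟩

theorem not_hasCup_union (h : SteeplyRight A B) {k : ℕ} (hA : ¬ HasCup A (k + 1))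
    (hB : ¬ HasCup B (k + 2)) : ¬ HasCup (A ∪ B) (k + 2) := by
  rintro ⟨f, hf, hcup⟩
  by_cases hkA : f k ∈ A
  · refine hA ⟨f, fun i hi => ?_, hcup.mono (by omega)⟩
    rcases (Nat.lt_succ_iff.1 hi).lt_or_eq with hi | rfl
    · exact h.mem_left_of_fst_lt (hf i (by omega)) hkA (hcup.1 i k hi (by omega))
    · exact hkA
  have hkB : f k ∈ B := (Finset.mem_union.1 (hf k (by omega))).resolve_left hkA
  -- a point of `A` followed by two points of `B` would make the cup turn downwards
  have step : ∀ i < k, f (i + 1) ∈ B → f i ∈ B := fun i hi hB1 => by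
    have hB2 := h.mem_right_of_fst_lt hB1 (hf (i + 2) (by omega))
      (hcup.1 _ _ (by omega) (by omega))
    refine (Finset.mem_union.1 (hf i (by omega))).resolve_left fun hA0 => ?_
    exact (h.slope_right_lt _ hA0 _ hB1 _ hB1 _ hB2).not_gt (hcup.2 i (by omega))
  refine hB ⟨f, fun i hi => ?_, hcup⟩
  rcases (Nat.lt_succ_iff.1 hi).lt_or_eq with hi | rfl
  · exact Nat.decreasingInduction (motive := fun i _ => f i ∈ B) step hkB (by omega)
  · exact h.mem_right_of_fst_lt hkB (hf _ hi) (hcup.1 k (k + 1) (by omega) (by omega))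

theorem not_hasCap_union (h : SteeplyRight A B) {l : ℕ} (hA : ¬ HasCap A (l + 2))
    (hB : ¬ HasCap B (l + 1)) : ¬ HasCap (A ∪ B) (l + 2) := by
  rintro ⟨f, hf, hcap⟩
  by_cases h1B : f 1 ∈ B
  · refine hB ⟨fun i => f (i + 1), fun i hi => ?_, hcap.tail⟩
    rcases Nat.eq_zero_or_pos i with rfl | hi0
    · exact h1B
    · exact h.mem_right_of_fst_lt h1B (hf _ (by omega)) (hcap.1 1 (i + 1) (by omega) (by omega))
  have h1A : f 1 ∈ A := (Finset.mem_union.1 (hf 1 (by omega))).resolve_right h1B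
  -- two points of `A` followed by a point of `B` would make the cap turn upwards
  have step : ∀ i < l, f (i + 1) ∈ A → f (i + 2) ∈ A := fun i hi hA1 => by
    have hA0 := h.mem_left_of_fst_lt (hf i (by omega)) hA1 (hcap.1 _ _ (by omega) (by omega))
    refine (Finset.mem_union.1 (hf (i + 2) (by omega))).resolve_right fun hB2 => ?_
    exact (h.slope_left_lt _ hA1 _ hB2 _ hA0 _ hA1).not_gt (hcap.2 i (by omega))
  refine hA ⟨f, fun i hi => ?_, hcap⟩
  rcases i with _ | i
  · exact h.mem_left_of_fst_lt (hf 0 (by omega)) h1A (hcap.1 0 1 (by omega) (by omega))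
  · induction i with
    | zero => exact h1A
    | succ i ih => exact step i (by omega) (ih (by omega))

theorem isCupCapFree_union (h : SteeplyRight A B) {k l : ℕ} (hA : IsCupCapFree (k + 1) (l + 2) A)
    (hB : IsCupCapFree (k + 2) (l + 1) B) : IsCupCapFree (k + 2) (l + 2) (A ∪ B) where
  genPos := h.genPos_union hA.genPos hB.genPos hA.injOn_fst hB.injOn_fst
  injOn_fst := h.injOn_fst_union hA.injOn_fst hB.injOn_fst
  not_hasCup := h.not_hasCup_union hA.not_hasCup hB.not_hasCup
  not_hasCap := h.not_hasCap_union hA.not_hasCap hB.not_hasCap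

end SteeplyRight

theorem exists_forall_mem_forall_mem_le {α β : Type*} (s : Finset α) (t : Finset β)
    (g : α → β → ℝ) : ∃ c, ∀ a ∈ s, ∀ b ∈ t, g a b ≤ c := by
  obtain ⟨c, hc⟩ := ((s ×ˢ t).image fun ab => g ab.1 ab.2).exists_le
  exact ⟨c, fun a ha b hb => hc _ (Finset.mem_image_of_mem _ (Finset.mk_mem_product ha hb))⟩

theorem exists_steeplyRight_vadd (A B : Finset (ℝ × ℝ)) :
    ∃ v : ℝ × ℝ, SteeplyRight A (v +ᵥ B) := by
  obtain ⟨SA, hSA⟩ := exists_forall_mem_forall_mem_le A A slope2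
  obtain ⟨SB, hSB⟩ := exists_forall_mem_forall_mem_le B B slope2
  obtain ⟨T, hT⟩ := exists_forall_mem_forall_mem_le A B fun a b => a.1 - b.1
  obtain ⟨M, hM⟩ := exists_forall_mem_forall_mem_le A B
    fun a b => max SA SB * (T + 1 + b.1 - a.1) + a.2 - b.2
  have steep (a) (ha : a ∈ A) (b) (hb : b ∈ B) : max SA SB < slope2 a ((T + 1, M + 1) + b) := by
    have hx : 0 < T + 1 + b.1 - a.1 := by linarith [hT a ha b hb]
    rw [slope2, lt_div_iff₀ (by simpa [add_sub_assoc] using hx)]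
    simp only [Prod.fst_add, Prod.snd_add]
    linarith [hM a ha b hb]
  refine ⟨(T + 1, M + 1), ⟨?_, ?_, ?_⟩⟩ <;>
    simp only [Finset.mem_vadd_finset, vadd_eq_add, forall_exists_index, and_imp,
      forall_apply_eq_imp_iff₂]
  · intro a ha b hb
    simpa using (by linarith [hT a ha b hb] : a.1 < T + 1 + b.1)
  · exact fun a ha b hb p hp q hq =>
      (hSA p hp q hq).trans_lt ((le_max_left _ _).trans_lt (steep a ha b hb))
  · intro a ha b hb p hp q hq
    rw [slope2_add_left]
    exact (hSB p hp q hq).trans_lt ((le_max_right _ _).trans_lt (steep a ha b hb))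

theorem exists_isCupCapFree :
    ∀ k l : ℕ, ∃ P : Finset (ℝ × ℝ), P.card = (k + l).choose k ∧ IsCupCapFree (k + 2) (l + 2) P
  | 0, l => ⟨{0}, by simp, isCupCapFree_singleton 0 le_rfl (by omega)⟩
  | k + 1, 0 => ⟨{0}, by simp, isCupCapFree_singleton 0 (by omega) le_rfl⟩
  | k + 1, l + 1 => by
    obtain ⟨A, hAcard, hA⟩ := exists_isCupCapFree k (l + 1)
    obtain ⟨B, hBcard, hB⟩ := exists_isCupCapFree (k + 1) l
    obtain ⟨v, hv⟩ := exists_steeplyRight_vadd A B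
    refine ⟨A ∪ (v +ᵥ B), ?_, hv.isCupCapFree_union hA (hB.vadd v)⟩
    rw [Finset.card_union_of_disjoint hv.disjoint, Finset.card_vadd_finset, hAcard, hBcard,
      show k + 1 + (l + 1) = k + l + 1 + 1 by omega, Nat.choose_succ_succ',
      show k + (l + 1) = k + l + 1 by omega, show k + 1 + l = k + l + 1 by omega]

/-- Erdős–Szekeres cups–caps theorem (lower bound): there are C(k+ℓ-4, k-2) points in
general position with distinct x-coordinates containing no k-cup and no ℓ-cap. -/
theorem stmt_3 (k l : ℕ) (hk : 2 ≤ k) (hl : 2 ≤ l) :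
    ∃ P : Finset (ℝ × ℝ), P.card = Nat.choose (k + l - 4) (k - 2) ∧
      GenPos (P : Set (ℝ × ℝ)) ∧
      (∀ p ∈ P, ∀ q ∈ P, p ≠ q → p.1 ≠ q.1) ∧
      (¬ ∃ f : ℕ → ℝ × ℝ, (∀ i < k, f i ∈ P) ∧ IsCupSeq k f) ∧
      (¬ ∃ f : ℕ → ℝ × ℝ, (∀ i < l, f i ∈ P) ∧ IsCapSeq l f) := by
  obtain ⟨k, rfl⟩ : ∃ k', k = k' + 2 := ⟨k - 2, by omega⟩
  obtain ⟨l, rfl⟩ : ∃ l', l = l' + 2 := ⟨l - 2, by omega⟩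
  obtain ⟨P, hcard, hP⟩ := exists_isCupCapFree k l
  refine ⟨P, by rwa [show k + 2 + (l + 2) - 4 = k + l by omega, Nat.add_sub_cancel], hP.genPos,
    fun p hp q hq => hP.injOn_fst.ne hp hq, hP.not_hasCup, hP.not_hasCap⟩
end

section
/- For every integer n ≥ 3 there exists a set of 2^{n-2} points in the plane in general position containing no n points in convex position. -/
/-! The Erdős–Szekeres construction. Call a set a cup (cap) if any three of its points, sorted by
abscissa, turn left (right). By induction on `a + b` there is a set of `(a + b).choose a` points
with no `(a + 2)`-cup and no `(b + 2)`-cap: put a flattened copy of such a set for `(a, b + 1)`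
low on the left and one for `(a + 1, b)` high on the right. For `n = m + 2`, put flattened
copies of the sets for `(i, m - i)`, `i ≤ m`, on a steep convex curve; there are `2 ^ m` points.
A convex subset splits into an upper cap and a lower cup sharing its two extreme points. The
cap has at most one point before the block `j` of its last point, hence at most `m - j + 2`
points; the cup has at most one point in each block after that of its first point, hence at
most `j + 1`. So the convex subset has at most `m + 1` points. -/

open Finset

lemma det2_rotate (a b c : ℝ × ℝ) : det2 a b c = det2 b c a := by
  simp only [det2]; ring

lemma det2_swap (a b c : ℝ × ℝ) : det2 a b c = -det2 a c b := by
  simp only [det2]; ring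

lemma not_collinear_of_det2_ne_zero {p q r : ℝ × ℝ} (h : det2 p q r ≠ 0) :
    ¬ Collinear ℝ ({p, q, r} : Set (ℝ × ℝ)) := by
  rw [collinear_iff_of_mem (Set.mem_insert p _)]
  rintro ⟨v, hv⟩
  obtain ⟨s, rfl⟩ := hv q (by simp)
  obtain ⟨t, rfl⟩ := hv r (by simp)
  exact h (by simp only [det2, vadd_eq_add, Prod.fst_add, Prod.snd_add, Prod.smul_fst,
    Prod.smul_snd, smul_eq_mul]; ring)

lemma mul_le_of_abs_le {x y h L : ℝ} (hx : |x| ≤ h) (hy : |y| ≤ L) : x * y ≤ h * L :=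
  (le_abs_self _).trans (abs_mul x y ▸ mul_le_mul hx hy (abs_nonneg _) ((abs_nonneg _).trans hx))

lemma det2_pos_of_steep {p q s : ℝ × ℝ} {g h L H : ℝ} (hg : 0 ≤ g) (hpq : g ≤ q.1 - p.1)
    (hh : |q.2 - p.2| ≤ h) (hL : |s.1 - p.1| ≤ L) (hH : H ≤ s.2 - p.2) (hlt : h * L < g * H) :
    0 < det2 p q s := by
  have hH0 : 0 ≤ H := by
    nlinarith [mul_nonneg ((abs_nonneg _).trans hh) ((abs_nonneg _).trans hL)]
  have := mul_le_of_abs_le hh hL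
  have := mul_le_mul hpq hH hH0 (hg.trans hpq)
  unfold det2; linarith

lemma det2_neg_of_steep {p q s : ℝ × ℝ} {g h L H : ℝ} (hg : 0 ≤ g) (hpq : g ≤ q.1 - p.1)
    (hh : |q.2 - p.2| ≤ h) (hL : |s.1 - p.1| ≤ L) (hH : s.2 - p.2 ≤ -H) (hlt : h * L < g * H) :
    det2 p q s < 0 := by
  have hH0 : 0 ≤ H := by
    nlinarith [mul_nonneg ((abs_nonneg _).trans hh) ((abs_nonneg _).trans hL)]
  have := mul_le_of_abs_le (x := -(q.2 - p.2)) (h := h) (by rwa [abs_neg]) hL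
  have := mul_le_mul hpq (le_neg.mp hH) hH0 (hg.trans hpq)
  unfold det2; linarith

lemma mem_segment_of_fst_eq {u v q : ℝ × ℝ} (hu : u.1 = q.1) (hv : v.1 = q.1)
    (huq : u.2 ≤ q.2) (hqv : q.2 ≤ v.2) : q ∈ segment ℝ u v := by
  rw [← Prod.mk.eta (p := u), ← Prod.mk.eta (p := v), hu, hv, ← Prod.image_mk_segment_right,
    segment_eq_Icc (huq.trans hqv)]
  exact ⟨q.2, ⟨huq, hqv⟩, rfl⟩

lemma exists_mem_segment_det2 {a b q : ℝ × ℝ} (hab : a.1 < b.1) (haq : a.1 ≤ q.1)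
    (hqb : q.1 ≤ b.1) :
    ∃ w ∈ segment ℝ a b, w.1 = q.1 ∧ (b.1 - a.1) * (q.2 - w.2) = det2 a b q := by
  have hd : 0 < b.1 - a.1 := sub_pos.mpr hab
  set t := (q.1 - a.1) / (b.1 - a.1)
  have ht0 : 0 ≤ t := div_nonneg (by linarith) hd.le
  have ht1 : t ≤ 1 := (div_le_one hd).mpr (by linarith)
  refine ⟨(1 - t) • a + t • b, ⟨1 - t, t, by linarith, ht0, by ring, rfl⟩, ?_, ?_⟩ <;>
  · simp only [Prod.fst_add, Prod.snd_add, Prod.smul_fst, Prod.smul_snd, smul_eq_mul, det2, t]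
    field_simp
    ring

lemma mem_convexHull_of_between {a b c d q : ℝ × ℝ} (hab : a.1 < b.1) (haq : a.1 ≤ q.1)
    (hqb : q.1 ≤ b.1) (hcd : c.1 < d.1) (hcq : c.1 ≤ q.1) (hqd : q.1 ≤ d.1)
    (habq : 0 ≤ det2 a b q) (hcdq : det2 c d q ≤ 0) :
    q ∈ convexHull ℝ {a, b, c, d} := by
  obtain ⟨u, hu, hu1, hqu⟩ := exists_mem_segment_det2 hab haq hqb
  obtain ⟨v, hv, hv1, hqv⟩ := exists_mem_segment_det2 hcd hcq hqd
  have huq : u.2 ≤ q.2 := by nlinarith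
  have hqv : q.2 ≤ v.2 := by nlinarith
  have hu' := segment_subset_convexHull (s := {a, b, c, d}) (by simp) (by simp) hu
  have hv' := segment_subset_convexHull (s := {a, b, c, d}) (by simp) (by simp) hv
  exact (convex_convexHull ℝ _).segment_subset hu' hv'
    (mem_segment_of_fst_eq hu1 hv1 huq hqv)

/-- Distinct abscissae make it enough to exclude collinearity for triples sorted by `x`. -/
def SortedGenPos (S : Set (ℝ × ℝ)) : Prop :=
  Set.InjOn Prod.fst S ∧
    ∀ p ∈ S, ∀ q ∈ S, ∀ r ∈ S, p.1 < q.1 → q.1 < r.1 → det2 p q r ≠ 0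

def IsCup (C : Set (ℝ × ℝ)) : Prop :=
  ∀ p ∈ C, ∀ q ∈ C, ∀ r ∈ C, p.1 < q.1 → q.1 < r.1 → 0 < det2 p q r

def IsCap (C : Set (ℝ × ℝ)) : Prop :=
  ∀ p ∈ C, ∀ q ∈ C, ∀ r ∈ C, p.1 < q.1 → q.1 < r.1 → det2 p q r < 0

def CupsAtMost (n : ℕ) (S : Finset (ℝ × ℝ)) : Prop :=
  ∀ C ⊆ S, IsCup (C : Set (ℝ × ℝ)) → #C ≤ n

def CapsAtMost (n : ℕ) (S : Finset (ℝ × ℝ)) : Prop :=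
  ∀ C ⊆ S, IsCap (C : Set (ℝ × ℝ)) → #C ≤ n

lemma IsCup.mono {C D : Set (ℝ × ℝ)} (hD : IsCup D) (h : C ⊆ D) : IsCup C :=
  fun p hp q hq r hr => hD p (h hp) q (h hq) r (h hr)

lemma IsCap.mono {C D : Set (ℝ × ℝ)} (hD : IsCap D) (h : C ⊆ D) : IsCap C :=
  fun p hp q hq r hr => hD p (h hp) q (h hq) r (h hr)

lemma SortedGenPos.mono {S T : Set (ℝ × ℝ)} (hT : SortedGenPos T) (h : S ⊆ T) :
    SortedGenPos S :=
  ⟨hT.1.mono h, fun p hp q hq r hr => hT.2 p (h hp) q (h hq) r (h hr)⟩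

lemma SortedGenPos.det2_ne_zero {S : Set (ℝ × ℝ)} (hS : SortedGenPos S) {p q r : ℝ × ℝ}
    (hp : p ∈ S) (hq : q ∈ S) (hr : r ∈ S) (hpq : p ≠ q) (hpr : p ≠ r) (hqr : q ≠ r) :
    det2 p q r ≠ 0 := by
  have hx {u v} (hu : u ∈ S) (hv : v ∈ S) (huv : u ≠ v) : u.1 < v.1 ∨ v.1 < u.1 :=
    lt_or_gt_of_ne fun h => huv (hS.1 hu hv h)
  rcases hx hp hq hpq with h1 | h1 <;> rcases hx hq hr hqr with h2 | h2 <;>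
    rcases hx hp hr hpr with h3 | h3
  · exact hS.2 p hp q hq r hr h1 h2
  · exact absurd (h1.trans h2) h3.not_gt
  · rw [det2_swap]
    exact neg_ne_zero.mpr (hS.2 p hp r hr q hq h3 h2)
  · rw [det2_rotate, det2_rotate]
    exact hS.2 r hr p hp q hq h3 h1
  · rw [det2_rotate, det2_swap]
    exact neg_ne_zero.mpr (hS.2 q hq p hp r hr h1 h3)
  · rw [det2_rotate]
    exact hS.2 q hq r hr p hp h2 h3
  · exact absurd (h2.trans h1) h3.not_gt
  · rw [det2_rotate, det2_rotate, det2_swap]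
    exact neg_ne_zero.mpr (hS.2 r hr q hq p hp h2 h1)

lemma SortedGenPos.genPos {S : Set (ℝ × ℝ)} (hS : SortedGenPos S) : GenPos S :=
  fun _p hp _q hq _r hr hpq hpr hqr =>
    not_collinear_of_det2_ne_zero (hS.det2_ne_zero hp hq hr hpq hpr hqr)

lemma ConvexPos.not_mem_convexHull {S T : Set (ℝ × ℝ)} (hS : ConvexPos S) {q : ℝ × ℝ}
    (hq : q ∈ S) (hT : T ⊆ S \ {q}) : q ∉ convexHull ℝ T :=
  fun h => hS q hq (convexHull_mono hT h)

lemma ConvexPos.not_between {S : Set (ℝ × ℝ)} (hS : ConvexPos S) {a b p q r : ℝ × ℝ}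
    (ha : a ∈ S) (hb : b ∈ S) (hp : p ∈ S) (hq : q ∈ S) (hr : r ∈ S)
    (hap : a.1 ≤ p.1) (hpq : p.1 < q.1) (hqr : q.1 < r.1) (hrb : r.1 ≤ b.1)
    (hbetween : 0 ≤ det2 a b q ∧ det2 p r q ≤ 0 ∨ 0 ≤ det2 p r q ∧ det2 a b q ≤ 0) : False := by
  have hT : ({a, b, p, r} : Set (ℝ × ℝ)) ⊆ S \ {q} := by
    simp only [Set.insert_subset_iff, Set.singleton_subset_iff, Set.mem_sdiff,
      Set.mem_singleton_iff]
    refine ⟨⟨ha, ?_⟩, ⟨hb, ?_⟩, ⟨hp, ?_⟩, ⟨hr, ?_⟩⟩ <;> rintro rfl <;> linarith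
  refine hS.not_mem_convexHull hq hT ?_
  rcases hbetween with ⟨h₁, h₂⟩ | ⟨h₁, h₂⟩
  · exact mem_convexHull_of_between (by linarith) (by linarith) (by linarith)
      (hpq.trans hqr) hpq.le hqr.le h₁ h₂
  · have hswap : ({a, b, p, r} : Set (ℝ × ℝ)) = {p, r, a, b} := by
      ext; simp only [Set.mem_insert_iff, Set.mem_singleton_iff]; tauto
    rw [hswap]
    exact mem_convexHull_of_between (hpq.trans hqr) hpq.le hqr.le (by linarith) (by linarith)
      (by linarith) h₁ h₂

section Chains

variable {X : Finset (ℝ × ℝ)} {a b : ℝ × ℝ}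

lemma ConvexPos.isCap_filter (hX : ConvexPos (X : Set (ℝ × ℝ)))
    (hgen : SortedGenPos (X : Set (ℝ × ℝ))) (ha : a ∈ X) (hb : b ∈ X)
    (hleft : ∀ p ∈ X, a.1 ≤ p.1) (hright : ∀ p ∈ X, p.1 ≤ b.1) :
    IsCap (X.filter fun p => 0 ≤ det2 a b p : Set (ℝ × ℝ)) := by
  intro p hp q hq r hr hpq hqr
  simp only [coe_filter, Set.mem_ofPred_eq] at hp hq hr
  refine lt_of_le_of_ne (not_lt.mp fun hpos => ?_) (hgen.2 p hp.1 q hq.1 r hr.1 hpq hqr)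
  exact hX.not_between ha hb hp.1 hq.1 hr.1 (hleft p hp.1) hpq hqr (hright r hr.1)
    (.inl ⟨hq.2, by rw [det2_swap]; linarith⟩)

lemma ConvexPos.isCup_filter (hX : ConvexPos (X : Set (ℝ × ℝ)))
    (hgen : SortedGenPos (X : Set (ℝ × ℝ))) (ha : a ∈ X) (hb : b ∈ X)
    (hleft : ∀ p ∈ X, a.1 ≤ p.1) (hright : ∀ p ∈ X, p.1 ≤ b.1) :
    IsCup (X.filter fun p => det2 a b p ≤ 0 : Set (ℝ × ℝ)) := by
  intro p hp q hq r hr hpq hqr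
  simp only [coe_filter, Set.mem_ofPred_eq] at hp hq hr
  refine lt_of_le_of_ne (not_lt.mp fun hneg => ?_) (hgen.2 p hp.1 q hq.1 r hr.1 hpq hqr).symm
  exact hX.not_between ha hb hp.1 hq.1 hr.1 (hleft p hp.1) hpq hqr (hright r hr.1)
    (.inr ⟨by rw [det2_swap]; linarith, hq.2⟩)

/-- The upper and lower chains of `X` share exactly the two extreme points. -/
lemma card_filter_add_card_filter (hgen : SortedGenPos (X : Set (ℝ × ℝ))) (ha : a ∈ X)
    (hb : b ∈ X) (hab : a ≠ b) :
    #(X.filter fun p => 0 ≤ det2 a b p) + #(X.filter fun p => det2 a b p ≤ 0) = #X + 2 := by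
  rw [← card_union_add_card_inter, ← filter_or, ← filter_and,
    filter_true_of_mem fun p _ => le_total _ _]
  have hpair : (X.filter fun p => 0 ≤ det2 a b p ∧ det2 a b p ≤ 0) = {a, b} := by
    ext p
    simp only [mem_filter, mem_insert, mem_singleton, ← le_antisymm_iff, eq_comm (a := (0 : ℝ))]
    constructor
    · rintro ⟨hp, h0⟩
      by_contra! h
      exact hgen.det2_ne_zero ha hb hp hab (Ne.symm h.1) (Ne.symm h.2) h0
    · rintro (rfl | rfl)
      · exact ⟨ha, by simp [det2]⟩
      · exact ⟨hb, by simp only [det2]; ring⟩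
  rw [hpair, card_pair hab]

end Chains

def scaleShift (α β γ δ : ℝ) (p : ℝ × ℝ) : ℝ × ℝ := (α * p.1 + β, γ * p.2 + δ)

section ScaleShift

variable {α β γ δ : ℝ}

lemma det2_scaleShift (p q r : ℝ × ℝ) :
    det2 (scaleShift α β γ δ p) (scaleShift α β γ δ q) (scaleShift α β γ δ r) =
      α * γ * det2 p q r := by
  simp only [det2, scaleShift]; ring

lemma scaleShift_fst_lt_iff (hα : 0 < α) {p q : ℝ × ℝ} :
    (scaleShift α β γ δ p).1 < (scaleShift α β γ δ q).1 ↔ p.1 < q.1 := by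
  simp only [scaleShift, add_lt_add_iff_right, mul_lt_mul_iff_right₀ hα]

lemma scaleShift_injective (hα : α ≠ 0) (hγ : γ ≠ 0) :
    Function.Injective (scaleShift α β γ δ) := by
  intro p q h
  simp only [scaleShift, Prod.mk.injEq, add_left_inj, mul_right_inj' hα, mul_right_inj' hγ] at h
  exact Prod.ext h.1 h.2

lemma SortedGenPos.image_scaleShift (hα : 0 < α) (hγ : 0 < γ) {S : Set (ℝ × ℝ)}
    (hS : SortedGenPos S) : SortedGenPos (scaleShift α β γ δ '' S) := by
  refine ⟨?_, ?_⟩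
  · rintro _ ⟨p, hp, rfl⟩ _ ⟨q, hq, rfl⟩ h
    exact congrArg _ (hS.1 hp hq (by simpa [scaleShift, hα.ne'] using h))
  · rintro _ ⟨p, hp, rfl⟩ _ ⟨q, hq, rfl⟩ _ ⟨r, hr, rfl⟩ hpq hqr
    rw [scaleShift_fst_lt_iff hα] at hpq hqr
    rw [det2_scaleShift]
    exact mul_ne_zero (mul_pos hα hγ).ne' (hS.2 p hp q hq r hr hpq hqr)

lemma IsCup.of_image_scaleShift (hα : 0 < α) (hγ : 0 < γ) {C : Set (ℝ × ℝ)}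
    (hC : IsCup (scaleShift α β γ δ '' C)) : IsCup C := by
  intro p hp q hq r hr hpq hqr
  have := hC _ (Set.mem_image_of_mem _ hp) _ (Set.mem_image_of_mem _ hq) _
    (Set.mem_image_of_mem _ hr) ((scaleShift_fst_lt_iff hα).mpr hpq)
    ((scaleShift_fst_lt_iff hα).mpr hqr)
  rw [det2_scaleShift] at this
  exact pos_of_mul_pos_right this (mul_pos hα hγ).le

lemma IsCap.of_image_scaleShift (hα : 0 < α) (hγ : 0 < γ) {C : Set (ℝ × ℝ)}
    (hC : IsCap (scaleShift α β γ δ '' C)) : IsCap C := by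
  intro p hp q hq r hr hpq hqr
  have := hC _ (Set.mem_image_of_mem _ hp) _ (Set.mem_image_of_mem _ hq) _
    (Set.mem_image_of_mem _ hr) ((scaleShift_fst_lt_iff hα).mpr hpq)
    ((scaleShift_fst_lt_iff hα).mpr hqr)
  rw [det2_scaleShift] at this
  exact neg_of_mul_neg_right this (mul_pos hα hγ).le

lemma CupsAtMost.image_scaleShift (hα : 0 < α) (hγ : 0 < γ) {n : ℕ} {S : Finset (ℝ × ℝ)}
    (hS : CupsAtMost n S) : CupsAtMost n (S.image (scaleShift α β γ δ)) := by
  intro C hC hcup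
  obtain ⟨C, hCS, rfl⟩ := subset_image_iff.mp hC
  rw [card_image_of_injective _ (scaleShift_injective hα.ne' hγ.ne')]
  exact hS C hCS (.of_image_scaleShift hα hγ (by rwa [coe_image] at hcup))

lemma CapsAtMost.image_scaleShift (hα : 0 < α) (hγ : 0 < γ) {n : ℕ} {S : Finset (ℝ × ℝ)}
    (hS : CapsAtMost n S) : CapsAtMost n (S.image (scaleShift α β γ δ)) := by
  intro C hC hcap
  obtain ⟨C, hCS, rfl⟩ := subset_image_iff.mp hC
  rw [card_image_of_injective _ (scaleShift_injective hα.ne' hγ.ne')]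
  exact hS C hCS (.of_image_scaleShift hα hγ (by rwa [coe_image] at hcap))

end ScaleShift

/-- The height ratio `4k + 4` between consecutive slots exceeds the total width `4k + 1`, so
every slope between two slots beats every slope inside one. -/
def slot (k : ℕ) (ε : ℝ) (i : ℕ) : ℝ × ℝ → ℝ × ℝ :=
  scaleShift 1 (4 * i) ε ((4 * k + 4) ^ i)

def InSlot (k : ℕ) (ε : ℝ) (i : ℕ) (p : ℝ × ℝ) : Prop :=
  4 * i ≤ p.1 ∧ p.1 ≤ 4 * i + 1 ∧ (4 * k + 4 : ℝ) ^ i ≤ p.2 ∧ p.2 ≤ (4 * k + 4) ^ i + ε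

section Slots

variable {k : ℕ} {ε : ℝ} {i j l : ℕ}

lemma pow_mul_le_pow_of_lt {W : ℝ} (hW : 1 ≤ W) (hij : i < j) : W ^ i * W ≤ W ^ j := by
  rw [← pow_succ]; exact pow_le_pow_right₀ hW hij

lemma det2_pos_of_inSlot_of_lt {p q s : ℝ × ℝ} (hε : 0 < ε) (hε1 : ε ≤ 1) (hij : i < j)
    (hjk : j ≤ k) (hp : InSlot k ε i p) (hq : InSlot k ε i q) (hs : InSlot k ε j s)
    (hpq : ε ≤ q.1 - p.1) : 0 < det2 p q s := by
  obtain ⟨hp1, hp2, hp3, hp4⟩ := hp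
  obtain ⟨hq1, hq2, hq3, hq4⟩ := hq
  obtain ⟨hs1, hs2, hs3, hs4⟩ := hs
  have hij' : (i : ℝ) + 1 ≤ j := by exact_mod_cast hij
  have hjk' : (j : ℝ) ≤ k := by exact_mod_cast hjk
  have hW : (1 : ℝ) ≤ 4 * k + 4 := by linarith [(k.cast_nonneg : (0 : ℝ) ≤ k)]
  have hWi : (1 : ℝ) ≤ (4 * k + 4) ^ i := one_le_pow₀ hW
  have hWij := pow_mul_le_pow_of_lt hW hij
  refine det2_pos_of_steep (h := ε) (L := 4 * k + 1) (H := 4 * k + 2) hε.le hpq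
    (abs_le.mpr ⟨by linarith, by linarith⟩) (abs_le.mpr ⟨by linarith, by linarith⟩)
    (by nlinarith) (by nlinarith)

lemma det2_neg_of_inSlot_of_lt {u v w : ℝ × ℝ} (hε : 0 < ε) (hε1 : ε ≤ 1) (hij : i < j)
    (hjk : j ≤ k) (hu : InSlot k ε j u) (hv : InSlot k ε j v) (hw : InSlot k ε i w)
    (huv : ε ≤ v.1 - u.1) : det2 u v w < 0 := by
  obtain ⟨hu1, hu2, hu3, hu4⟩ := hu
  obtain ⟨hv1, hv2, hv3, hv4⟩ := hv
  obtain ⟨hw1, hw2, hw3, hw4⟩ := hw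
  have hij' : (i : ℝ) + 1 ≤ j := by exact_mod_cast hij
  have hjk' : (j : ℝ) ≤ k := by exact_mod_cast hjk
  have hW : (1 : ℝ) ≤ 4 * k + 4 := by linarith [(k.cast_nonneg : (0 : ℝ) ≤ k)]
  have hWi : (1 : ℝ) ≤ (4 * k + 4) ^ i := one_le_pow₀ hW
  have hWij := pow_mul_le_pow_of_lt hW hij
  refine det2_neg_of_steep (h := ε) (L := 4 * k + 1) (H := 4 * k + 2) hε.le huv
    (abs_le.mpr ⟨by linarith, by linarith⟩) (abs_le.mpr ⟨by linarith, by linarith⟩)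
    (by nlinarith) (by nlinarith)

lemma det2_pos_of_inSlot_of_lt_of_lt {a b c : ℝ × ℝ} (hε1 : ε ≤ 1) (hij : i < j)
    (hjl : j < l) (hlk : l ≤ k) (ha : InSlot k ε i a) (hb : InSlot k ε j b)
    (hc : InSlot k ε l c) : 0 < det2 a b c := by
  obtain ⟨ha1, ha2, ha3, ha4⟩ := ha
  obtain ⟨hb1, hb2, hb3, hb4⟩ := hb
  obtain ⟨hc1, hc2, hc3, hc4⟩ := hc
  have hij' : (i : ℝ) + 1 ≤ j := by exact_mod_cast hij
  have hjl' : (j : ℝ) + 1 ≤ l := by exact_mod_cast hjl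
  have hlk' : (l : ℝ) ≤ k := by exact_mod_cast hlk
  have hW : (1 : ℝ) ≤ 4 * k + 4 := by linarith [(k.cast_nonneg : (0 : ℝ) ≤ k)]
  have hWi : (1 : ℝ) ≤ (4 * k + 4) ^ i := one_le_pow₀ hW
  have hWij := pow_mul_le_pow_of_lt hW hij
  have hWjl := pow_mul_le_pow_of_lt hW hjl
  have hWj : (0 : ℝ) < (4 * k + 4) ^ j := by positivity
  refine det2_pos_of_steep (g := 3) (h := (4 * k + 4) ^ j) (L := 4 * k + 1)
    (H := (4 * k + 4) ^ j * (4 * k + 2)) (by norm_num) (by linarith)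
    (abs_le.mpr ⟨by nlinarith, by nlinarith⟩) (abs_le.mpr ⟨by linarith, by linarith⟩)
    (by nlinarith) (by nlinarith)

end Slots

noncomputable def placed (k : ℕ) (ε : ℝ) (S : ℕ → Finset (ℝ × ℝ)) : Finset (ℝ × ℝ) :=
  (range (k + 1)).biUnion fun i => (S i).image (slot k ε i)

noncomputable def slotIdx (p : ℝ × ℝ) : ℕ := ⌊p.1 / 4⌋₊

structure IsPlaceable (k : ℕ) (ε : ℝ) (S : ℕ → Finset (ℝ × ℝ)) : Prop where
  pos : 0 < ε
  le_one : ε ≤ 1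
  subset_unitSquare : ∀ i ≤ k, (S i : Set (ℝ × ℝ)) ⊆ Set.Icc 0 1
  gap : ∀ i ≤ k, ∀ p ∈ S i, ∀ q ∈ S i, p.1 < q.1 → ε ≤ q.1 - p.1
  sortedGenPos : ∀ i ≤ k, SortedGenPos (S i : Set (ℝ × ℝ))

section Placement

variable {k : ℕ} {ε : ℝ} {i : ℕ} {p q : ℝ × ℝ}

lemma inSlot_slot (hε : 0 ≤ ε) (hp : p ∈ Set.Icc 0 1) : InSlot k ε i (slot k ε i p) := by
  simp only [Set.mem_Icc, Prod.le_def, Prod.fst_zero, Prod.snd_zero, Prod.fst_one,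
    Prod.snd_one] at hp
  obtain ⟨⟨h1, h2⟩, h3, h4⟩ := hp
  refine ⟨?_, ?_, ?_, ?_⟩ <;> simp only [slot, scaleShift] <;> nlinarith

lemma slotIdx_eq_of_inSlot (hp : InSlot k ε i p) : slotIdx p = i := by
  obtain ⟨h1, h2, -⟩ := hp
  rw [slotIdx, Nat.floor_eq_iff (by linarith [(i.cast_nonneg : (0 : ℝ) ≤ i)])]
  constructor <;> linarith

lemma slotIdx_mono (h : p.1 ≤ q.1) : slotIdx p ≤ slotIdx q :=
  Nat.floor_mono (div_le_div_of_nonneg_right h (by norm_num))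

lemma fst_lt_of_slotIdx_lt (h : slotIdx p < slotIdx q) : p.1 < q.1 :=
  lt_of_not_ge fun h' => h.not_ge (slotIdx_mono h')

lemma exists_of_mem_placed {S : ℕ → Finset (ℝ × ℝ)} (hp : p ∈ placed k ε S) :
    ∃ i ≤ k, ∃ p₀ ∈ S i, slot k ε i p₀ = p := by
  simpa [placed, Nat.lt_succ_iff] using hp

namespace IsPlaceable

variable {S : ℕ → Finset (ℝ × ℝ)} {r : ℝ × ℝ}

lemma slotIdx_slot (hS : IsPlaceable k ε S) (hi : i ≤ k) {p₀ : ℝ × ℝ} (hp₀ : p₀ ∈ S i) :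
    slotIdx (slot k ε i p₀) = i :=
  slotIdx_eq_of_inSlot (inSlot_slot hS.pos.le (hS.subset_unitSquare i hi hp₀))

lemma slotIdx_le (hS : IsPlaceable k ε S) (hp : p ∈ placed k ε S) : slotIdx p ≤ k := by
  obtain ⟨i, hi, p₀, hp₀, rfl⟩ := exists_of_mem_placed hp
  rwa [hS.slotIdx_slot hi hp₀]

lemma inSlot (hS : IsPlaceable k ε S) (hp : p ∈ placed k ε S) : InSlot k ε (slotIdx p) p := by
  obtain ⟨i, hi, p₀, hp₀, rfl⟩ := exists_of_mem_placed hp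
  rw [hS.slotIdx_slot hi hp₀]
  exact inSlot_slot hS.pos.le (hS.subset_unitSquare i hi hp₀)

lemma gap_placed (hS : IsPlaceable k ε S) (hp : p ∈ placed k ε S) (hq : q ∈ placed k ε S)
    (hpq : slotIdx p = slotIdx q) (h : p.1 < q.1) : ε ≤ q.1 - p.1 := by
  obtain ⟨i, hi, p₀, hp₀, rfl⟩ := exists_of_mem_placed hp
  obtain ⟨j, hj, q₀, hq₀, rfl⟩ := exists_of_mem_placed hq
  rw [hS.slotIdx_slot hi hp₀, hS.slotIdx_slot hj hq₀] at hpq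
  subst hpq
  simp only [slot, scaleShift, one_mul, add_lt_add_iff_right] at h ⊢
  linarith [hS.gap i hi p₀ hp₀ q₀ hq₀ h]

lemma det2_pos_of_slotIdx_eq_of_lt (hS : IsPlaceable k ε S) (hp : p ∈ placed k ε S)
    (hq : q ∈ placed k ε S) (hr : r ∈ placed k ε S) (hpq : slotIdx p = slotIdx q)
    (hqr : slotIdx q < slotIdx r) (h : p.1 < q.1) : 0 < det2 p q r :=
  det2_pos_of_inSlot_of_lt hS.pos hS.le_one hqr (hS.slotIdx_le hr)
    (hpq ▸ hS.inSlot hp) (hS.inSlot hq) (hS.inSlot hr) (hS.gap_placed hp hq hpq h)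

lemma det2_neg_of_lt_of_slotIdx_eq (hS : IsPlaceable k ε S) (hp : p ∈ placed k ε S)
    (hq : q ∈ placed k ε S) (hr : r ∈ placed k ε S) (hrp : slotIdx r < slotIdx p)
    (hpq : slotIdx p = slotIdx q) (h : p.1 < q.1) : det2 p q r < 0 :=
  det2_neg_of_inSlot_of_lt hS.pos hS.le_one hrp (hS.slotIdx_le hp)
    (hS.inSlot hp) (hpq ▸ hS.inSlot hq) (hS.inSlot hr) (hS.gap_placed hp hq hpq h)

lemma det2_pos_of_slotIdx_lt_of_lt (hS : IsPlaceable k ε S) (hp : p ∈ placed k ε S)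
    (hq : q ∈ placed k ε S) (hr : r ∈ placed k ε S) (hpq : slotIdx p < slotIdx q)
    (hqr : slotIdx q < slotIdx r) : 0 < det2 p q r :=
  det2_pos_of_inSlot_of_lt_of_lt hS.le_one hpq hqr (hS.slotIdx_le hr)
    (hS.inSlot hp) (hS.inSlot hq) (hS.inSlot hr)

lemma subset_image_of_slotIdx_eq (hS : IsPlaceable k ε S) {C : Finset (ℝ × ℝ)}
    (hC : C ⊆ placed k ε S) (hCi : ∀ p ∈ C, slotIdx p = i) : C ⊆ (S i).image (slot k ε i) := by
  intro p hp
  obtain ⟨j, hj, p₀, hp₀, rfl⟩ := exists_of_mem_placed (hC hp)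
  rw [← hCi _ hp, hS.slotIdx_slot hj hp₀]
  exact mem_image_of_mem _ hp₀

lemma mem_image_slot (hS : IsPlaceable k ε S) (hp : p ∈ placed k ε S) :
    p ∈ (S (slotIdx p)).image (slot k ε (slotIdx p)) :=
  hS.subset_image_of_slotIdx_eq (C := {p}) (by simpa using hp) (by simp) (mem_singleton_self p)

lemma sortedGenPos_image_slot (hS : IsPlaceable k ε S) (hi : i ≤ k) :
    SortedGenPos ((S i).image (slot k ε i) : Set (ℝ × ℝ)) := by
  rw [coe_image]
  exact (hS.sortedGenPos i hi).image_scaleShift one_pos hS.pos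

lemma sortedGenPos_placed (hS : IsPlaceable k ε S) :
    SortedGenPos (placed k ε S : Set (ℝ × ℝ)) := by
  refine ⟨fun p hp q hq h => ?_, fun p hp q hq r hr hpq hqr => ?_⟩
  · have hidx : slotIdx p = slotIdx q := by simp only [slotIdx, h]
    have hp' := hS.mem_image_slot hp
    rw [hidx] at hp'
    exact (hS.sortedGenPos_image_slot (hS.slotIdx_le hq)).1 hp' (hS.mem_image_slot hq) h
  rcases (slotIdx_mono hpq.le).eq_or_lt with hpq' | hpq' <;>
    rcases (slotIdx_mono hqr.le).eq_or_lt with hqr' | hqr'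
  · have hp' := hS.mem_image_slot hp
    have hr' := hS.mem_image_slot hr
    rw [hpq'] at hp'
    rw [← hqr'] at hr'
    exact (hS.sortedGenPos_image_slot (hS.slotIdx_le hq)).2 p hp' q (hS.mem_image_slot hq) r hr'
      hpq hqr
  · exact (hS.det2_pos_of_slotIdx_eq_of_lt hp hq hr hpq' hqr' hpq).ne'
  · rw [det2_rotate]
    exact (hS.det2_neg_of_lt_of_slotIdx_eq hq hr hp hpq' hqr' hqr).ne
  · exact (hS.det2_pos_of_slotIdx_lt_of_lt hp hq hr hpq' hqr').ne'

lemma card_placed (hS : IsPlaceable k ε S) : #(placed k ε S) = ∑ i ∈ range (k + 1), #(S i) := by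
  rw [placed, card_biUnion]
  · exact sum_congr rfl fun i _ => card_image_of_injective _
      (scaleShift_injective one_ne_zero hS.pos.ne')
  · intro i hi j hj hij
    refine disjoint_left.mpr fun p hpi hpj => hij ?_
    simp only [coe_range, Set.mem_Iio, Nat.lt_succ_iff] at hi hj
    obtain ⟨p₀, hp₀, rfl⟩ := mem_image.mp hpi
    obtain ⟨q₀, hq₀, hpq⟩ := mem_image.mp hpj
    rw [← hS.slotIdx_slot hi hp₀, ← hS.slotIdx_slot hj hq₀, hpq]

lemma card_le_of_isCup_of_slotIdx_eq (hS : IsPlaceable k ε S) {n : ℕ}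
    (hc : CupsAtMost n (S i)) {C : Finset (ℝ × ℝ)} (hC : C ⊆ placed k ε S)
    (hcup : IsCup (C : Set (ℝ × ℝ))) (hCi : ∀ p ∈ C, slotIdx p = i) : #C ≤ n :=
  hc.image_scaleShift one_pos hS.pos C (hS.subset_image_of_slotIdx_eq hC hCi) hcup

lemma card_le_of_isCap_of_slotIdx_eq (hS : IsPlaceable k ε S) {n : ℕ}
    (hd : CapsAtMost n (S i)) {C : Finset (ℝ × ℝ)} (hC : C ⊆ placed k ε S)
    (hcap : IsCap (C : Set (ℝ × ℝ))) (hCi : ∀ p ∈ C, slotIdx p = i) : #C ≤ n :=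
  hd.image_scaleShift one_pos hS.pos C (hS.subset_image_of_slotIdx_eq hC hCi) hcap

/-- A cup meets each slot after the one of its point `a` at most once, since two points of a
later slot form a cap with `a`. -/
lemma card_le_of_isCup (hS : IsPlaceable k ε S) {c : ℕ → ℕ}
    (hc : ∀ i ≤ k, CupsAtMost (c i) (S i)) {C : Finset (ℝ × ℝ)} (hC : C ⊆ placed k ε S)
    (hcup : IsCup (C : Set (ℝ × ℝ))) {a : ℝ × ℝ} (ha : a ∈ C) {j : ℕ}
    (hCj : ∀ p ∈ C, slotIdx a ≤ slotIdx p ∧ slotIdx p ≤ j) :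
    #C ≤ c (slotIdx a) + (j - slotIdx a) := by
  rw [← card_filter_add_card_filter_not (fun p => slotIdx p = slotIdx a)]
  refine add_le_add ?_ ?_
  · exact hS.card_le_of_isCup_of_slotIdx_eq (hc _ (hS.slotIdx_le (hC ha)))
      ((filter_subset _ _).trans hC) (hcup.mono (coe_subset.mpr (filter_subset _ _)))
      fun p hp => (mem_filter.mp hp).2
  have key {p q : ℝ × ℝ} (hp : p ∈ C) (hq : q ∈ C) (hap : slotIdx a < slotIdx p)
      (hpq : slotIdx p = slotIdx q) (h : p.1 < q.1) : False := by
    have := hS.det2_neg_of_lt_of_slotIdx_eq (hC hp) (hC hq) (hC ha) hap hpq h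
    have := hcup a ha p hp q hq (fst_lt_of_slotIdx_lt hap) h
    rw [det2_rotate] at this
    linarith
  refine (card_le_card_of_injOn slotIdx (t := Ioc (slotIdx a) j) ?_ ?_).trans
    (Nat.card_Ioc _ _).le
  · intro p hp
    simp only [coe_filter, Set.mem_ofPred_eq] at hp
    exact mem_Ioc.mpr ⟨lt_of_le_of_ne (hCj p hp.1).1 (Ne.symm hp.2), (hCj p hp.1).2⟩
  · intro p hp q hq hpq
    simp only [coe_filter, Set.mem_ofPred_eq] at hp hq
    by_contra hne
    have hap := lt_of_le_of_ne (hCj p hp.1).1 (Ne.symm hp.2)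
    rcases lt_or_gt_of_ne fun h => hne ((hS.sortedGenPos_placed).1 (hC hp.1) (hC hq.1) h)
      with h | h
    · exact key hp.1 hq.1 hap hpq h
    · exact key hq.1 hp.1 (hpq ▸ hap) hpq.symm h

/-- A cap has at most one point before the slot of its point `b`: two earlier points form a
cup with `b`. -/
lemma card_le_of_isCap (hS : IsPlaceable k ε S) {d : ℕ → ℕ}
    (hd : ∀ i ≤ k, CapsAtMost (d i) (S i)) {C : Finset (ℝ × ℝ)} (hC : C ⊆ placed k ε S)
    (hcap : IsCap (C : Set (ℝ × ℝ))) {b : ℝ × ℝ} (hb : b ∈ C)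
    (hCb : ∀ p ∈ C, slotIdx p ≤ slotIdx b) : #C ≤ d (slotIdx b) + 1 := by
  rw [← card_filter_add_card_filter_not (fun p => slotIdx p = slotIdx b)]
  refine add_le_add ?_ ?_
  · exact hS.card_le_of_isCap_of_slotIdx_eq (hd _ (hS.slotIdx_le (hC hb)))
      ((filter_subset _ _).trans hC) (hcap.mono (coe_subset.mpr (filter_subset _ _)))
      fun p hp => (mem_filter.mp hp).2
  have key {p q : ℝ × ℝ} (hp : p ∈ C) (hq : q ∈ C) (hqb : slotIdx q < slotIdx b)
      (h : p.1 < q.1) : False := by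
    have hpq := slotIdx_mono h.le
    have := hcap p hp q hq b hb h (fst_lt_of_slotIdx_lt hqb)
    rcases hpq.eq_or_lt with hpq | hpq
    · linarith [hS.det2_pos_of_slotIdx_eq_of_lt (hC hp) (hC hq) (hC hb) hpq hqb h]
    · linarith [hS.det2_pos_of_slotIdx_lt_of_lt (hC hp) (hC hq) (hC hb) hpq hqb]
  refine card_le_one.mpr fun p hp q hq => ?_
  simp only [mem_filter] at hp hq
  by_contra hne
  rcases lt_or_gt_of_ne fun h => hne ((hS.sortedGenPos_placed).1 (hC hp.1) (hC hq.1) h)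
    with h | h
  · exact key hp.1 hq.1 (lt_of_le_of_ne (hCb q hq.1) hq.2) h
  · exact key hq.1 hp.1 (lt_of_le_of_ne (hCb p hp.1) hp.2) h

lemma card_le_of_convexPos (hS : IsPlaceable k ε S) (hc : ∀ i ≤ k, CupsAtMost (i + 1) (S i))
    (hd : ∀ i ≤ k, CapsAtMost (k - i + 1) (S i)) {X : Finset (ℝ × ℝ)} (hX : X ⊆ placed k ε S)
    (hconv : ConvexPos (X : Set (ℝ × ℝ))) : #X ≤ k + 1 := by
  have hgen : SortedGenPos (X : Set (ℝ × ℝ)) := hS.sortedGenPos_placed.mono (coe_subset.mpr hX)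
  rcases le_or_gt #X 1 with hX1 | hX1
  · omega
  obtain ⟨a, ha, hamin⟩ := X.exists_min_image Prod.fst (card_pos.mp (by omega))
  obtain ⟨b, hb, hbmax⟩ := X.exists_max_image Prod.fst (card_pos.mp (by omega))
  have hab : a ≠ b := by
    obtain ⟨p, hp, q, hq, hpq⟩ := one_lt_card.mp hX1
    rintro rfl
    exact hpq (hgen.1 hp hq (by linarith [hamin p hp, hbmax p hp, hamin q hq, hbmax q hq]))
  have hcap := hS.card_le_of_isCap hd ((filter_subset _ _).trans hX)
    (hconv.isCap_filter hgen ha hb hamin hbmax)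
    (mem_filter.mpr ⟨hb, by simp only [det2]; nlinarith⟩)
    fun p hp => slotIdx_mono (hbmax p (mem_filter.mp hp).1)
  have hcup := hS.card_le_of_isCup hc ((filter_subset _ _).trans hX)
    (hconv.isCup_filter hgen ha hb hamin hbmax) (mem_filter.mpr ⟨ha, by simp [det2]⟩)
    fun p hp => ⟨slotIdx_mono (hamin p (mem_filter.mp hp).1),
      slotIdx_mono (hbmax p (mem_filter.mp hp).1)⟩
  have := card_filter_add_card_filter hgen ha hb hab
  have := hS.slotIdx_le (hX hb)
  have := slotIdx_mono (hamin b hb)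
  omega

end IsPlaceable

end Placement

lemma exists_fst_gap (T : Finset (ℝ × ℝ)) :
    ∃ ε : ℝ, 0 < ε ∧ ε ≤ 1 ∧ ∀ p ∈ T, ∀ q ∈ T, p.1 < q.1 → ε ≤ q.1 - p.1 := by
  set D := insert 1 (((T ×ˢ T).filter fun x => x.1.1 < x.2.1).image fun x => x.2.1 - x.1.1)
  refine ⟨D.min' (insert_nonempty _ _), ?_, D.min'_le _ (mem_insert_self _ _), ?_⟩
  · obtain h | h := mem_insert.mp (D.min'_mem (insert_nonempty _ _))
    · rw [h]; exact one_pos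
    · obtain ⟨x, hx, hx'⟩ := mem_image.mp h
      rw [← hx']
      exact sub_pos.mpr (mem_filter.mp hx).2
  · intro p hp q hq h
    exact D.min'_le _ (mem_insert_of_mem (mem_image.mpr ⟨(p, q), by simp [hp, hq, h], rfl⟩))

/-- No `(a + 2)`-cup and no `(b + 2)`-cap. -/
structure CupCapBounded (a b : ℕ) (S : Finset (ℝ × ℝ)) : Prop where
  sortedGenPos : SortedGenPos (S : Set (ℝ × ℝ))
  cups : CupsAtMost (a + 1) S
  caps : CapsAtMost (b + 1) S

lemma cupCapBounded_singleton (a b : ℕ) (p : ℝ × ℝ) : CupCapBounded a b {p} := by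
  refine ⟨⟨by simp, ?_⟩, fun C hC _ => ?_, fun C hC _ => ?_⟩
  · simp only [coe_singleton, Set.mem_singleton_iff]
    rintro _ rfl _ rfl _ rfl h
    exact absurd h (lt_irrefl _)
  all_goals exact (card_le_card hC).trans (by simp)

namespace IsPlaceable

variable {ε : ℝ} {S : ℕ → Finset (ℝ × ℝ)}

lemma cupsAtMost_placed_one (hS : IsPlaceable 1 ε S) {a : ℕ}
    (hc : ∀ i ≤ 1, CupsAtMost (a + 1 + i) (S i)) : CupsAtMost (a + 2) (placed 1 ε S) := by
  intro C hC hcup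
  obtain rfl | hne := C.eq_empty_or_nonempty
  · simp
  obtain ⟨p, hp, hpmin⟩ := C.exists_min_image Prod.fst hne
  have := hS.card_le_of_isCup hc hC hcup hp
    fun q hq => ⟨slotIdx_mono (hpmin q hq), hS.slotIdx_le (hC hq)⟩
  have := hS.slotIdx_le (hC hp)
  omega

lemma capsAtMost_placed_one (hS : IsPlaceable 1 ε S) {b : ℕ}
    (hd : ∀ i ≤ 1, CapsAtMost (b + 2 - i) (S i)) : CapsAtMost (b + 2) (placed 1 ε S) := by
  intro C hC hcap
  obtain rfl | hne := C.eq_empty_or_nonempty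
  · simp
  obtain ⟨p, hp, hpmax⟩ := C.exists_max_image Prod.fst hne
  have hle : ∀ q ∈ C, slotIdx q ≤ slotIdx p := fun q hq => slotIdx_mono (hpmax q hq)
  obtain h0 | h1 : slotIdx p = 0 ∨ slotIdx p = 1 := by have := hS.slotIdx_le (hC hp); omega
  · exact hS.card_le_of_isCap_of_slotIdx_eq (hd 0 zero_le_one) hC hcap
      fun q hq => Nat.le_zero.mp (h0 ▸ hle q hq)
  · have := hS.card_le_of_isCap hd hC hcap hp hle
    omega

lemma image_placed_one_subset_unitSquare (hS : IsPlaceable 1 ε S) :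
    ((placed 1 ε S).image (scaleShift 5⁻¹ 0 9⁻¹ 0) : Set (ℝ × ℝ)) ⊆ Set.Icc 0 1 := by
  intro x hx
  obtain ⟨p, hp, rfl⟩ := mem_image.mp (mem_coe.mp hx)
  obtain ⟨h1, h2, h3, h4⟩ := hS.inSlot hp
  have hi := hS.slotIdx_le hp
  have := hS.le_one
  generalize slotIdx p = i at h1 h2 h3 h4 hi
  simp only [scaleShift, Set.mem_Icc, Prod.le_def, Prod.fst_zero, Prod.snd_zero,
    Prod.fst_one, Prod.snd_one]
  interval_cases i <;> norm_num at h1 h2 h3 h4 ⊢ <;> refine ⟨⟨?_, ?_⟩, ?_, ?_⟩ <;> linarith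

end IsPlaceable

/-- Place a copy of `A` low on the left and a copy of `B` high on the right: a cup meeting `A`
takes at most one point of `B`, and a cap meeting `B` at most one point of `A`. -/
lemma CupCapBounded.exists_union {a b : ℕ} {A B : Finset (ℝ × ℝ)}
    (hA₁ : (A : Set (ℝ × ℝ)) ⊆ Set.Icc 0 1) (hA : CupCapBounded a (b + 1) A)
    (hB₁ : (B : Set (ℝ × ℝ)) ⊆ Set.Icc 0 1) (hB : CupCapBounded (a + 1) b B) :
    ∃ S : Finset (ℝ × ℝ), #S = #A + #B ∧ (S : Set (ℝ × ℝ)) ⊆ Set.Icc 0 1 ∧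
      CupCapBounded (a + 1) (b + 1) S := by
  obtain ⟨ε, hε, hε1, hgap⟩ := exists_fst_gap (A ∪ B)
  set S : ℕ → Finset (ℝ × ℝ) := fun i => if i = 0 then A else B
  have hS : IsPlaceable 1 ε S := by
    refine ⟨hε, hε1, ?_, ?_, ?_⟩ <;> intro i _ <;> by_cases hi : i = 0 <;>
      simp only [S, hi, if_true, if_false]
    · exact hA₁
    · exact hB₁
    · exact fun p hp q hq => hgap p (mem_union_left _ hp) q (mem_union_left _ hq)
    · exact fun p hp q hq => hgap p (mem_union_right _ hp) q (mem_union_right _ hq)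
    · exact hA.sortedGenPos
    · exact hB.sortedGenPos
  have hc : ∀ i ≤ 1, CupsAtMost (a + 1 + i) (S i) := by
    intro i hi
    interval_cases i
    exacts [hA.cups, hB.cups]
  have hd : ∀ i ≤ 1, CapsAtMost (b + 2 - i) (S i) := by
    intro i hi
    interval_cases i
    exacts [hA.caps, hB.caps]
  refine ⟨(placed 1 ε S).image (scaleShift 5⁻¹ 0 9⁻¹ 0), ?_,
    hS.image_placed_one_subset_unitSquare, ?_, ?_, ?_⟩
  · rw [card_image_of_injective _ (scaleShift_injective (by norm_num) (by norm_num)),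
      hS.card_placed]
    simp [S, sum_range_succ]
  · rw [coe_image]
    exact hS.sortedGenPos_placed.image_scaleShift (by norm_num) (by norm_num)
  · exact (hS.cupsAtMost_placed_one hc).image_scaleShift (by norm_num) (by norm_num)
  · exact (hS.capsAtMost_placed_one hd).image_scaleShift (by norm_num) (by norm_num)

theorem exists_cupCapBounded : ∀ a b : ℕ, ∃ S : Finset (ℝ × ℝ), #S = (a + b).choose a ∧
    (S : Set (ℝ × ℝ)) ⊆ Set.Icc 0 1 ∧ CupCapBounded a b S
  | 0, b => ⟨{0}, by simp, by simp, cupCapBounded_singleton 0 b 0⟩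
  | a + 1, 0 => ⟨{0}, by simp, by simp, cupCapBounded_singleton (a + 1) 0 0⟩
  | a + 1, b + 1 => by
    obtain ⟨A, hAcard, hA₁, hA⟩ := exists_cupCapBounded a (b + 1)
    obtain ⟨B, hBcard, hB₁, hB⟩ := exists_cupCapBounded (a + 1) b
    obtain ⟨S, hS, hS₁, hS'⟩ := hA.exists_union hA₁ hB₁ hB
    refine ⟨S, ?_, hS₁, hS'⟩
    rw [hS, hAcard, hBcard, show a + 1 + (b + 1) = a + b + 1 + 1 by omega, Nat.choose_succ_succ,
      show a + (b + 1) = a + b + 1 by omega, show a + 1 + b = a + b + 1 by omega]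

/-- For every n ≥ 3 there is a set of 2^(n-2) points in general position with
no n points in convex position. -/
theorem stmt_6 (n : ℕ) (hn : 3 ≤ n) :
    ∃ P : Finset (ℝ × ℝ), P.card = 2 ^ (n - 2) ∧ GenPos (P : Set (ℝ × ℝ)) ∧
      ¬ ∃ S ⊆ P, S.card = n ∧ ConvexPos (S : Set (ℝ × ℝ)) := by
  obtain ⟨m, rfl⟩ : ∃ m, n = m + 2 := ⟨n - 2, by omega⟩
  choose A hAcard hA₁ hA using fun i => exists_cupCapBounded i (m - i)
  obtain ⟨ε, hε, hε1, hgap⟩ := exists_fst_gap ((range (m + 1)).biUnion A)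
  have hS : IsPlaceable m ε A := by
    refine ⟨hε, hε1, fun i _ => hA₁ i, fun i hi p hp q hq => ?_, fun i _ => (hA i).sortedGenPos⟩
    have hi' : i ∈ range (m + 1) := mem_range.mpr (Nat.lt_succ_of_le hi)
    exact hgap p (mem_biUnion.mpr ⟨i, hi', hp⟩) q (mem_biUnion.mpr ⟨i, hi', hq⟩)
  refine ⟨placed m ε A, ?_, hS.sortedGenPos_placed.genPos, ?_⟩
  · rw [hS.card_placed, Nat.add_sub_cancel, ← Nat.sum_range_choose]
    refine sum_congr rfl fun i hi => ?_
    rw [hAcard, Nat.add_sub_cancel' (Nat.lt_succ_iff.mp (mem_range.mp hi))]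
  · rintro ⟨X, hX, hXcard, hconv⟩
    have := hS.card_le_of_convexPos (fun i _ => (hA i).cups) (fun i _ => (hA i).caps) hX hconv
    omega
end
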